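/- arXiv:2102.12688 — 2 statements merged into one kernel-verified Lean document; each statement's English description precedes it below -/
import Mathlib

section
/- For a real number $q$ with $q > 0$ and $q \ne 1$, and for all integers $n \ge 1$ and $r \ge 1$, the $q$-hyperharmonic numbers satisfy $[n+r]_q\, H_n^{(r)}(q) = [n+1]_q\, H_{n+1}^{(r)}(q) - q^{n+r-1} \binom{n+r-1}{r-1}_q$. -/
/-- The `q`-integer `[n]_q = (1 - q^n)/(1 - q)`. -/
noncomputable def qint (q : ℝ) (n : ℕ) : ℝ := (1 - q ^ n) / (1 - q)

/-- The `q`-factorial `[n]_q! = [n]_q [n-1]_q ⋯ [1]_q`, with `[0]_q! = 1`. -/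
noncomputable def qfact (q : ℝ) : ℕ → ℝ
  | 0 => 1
  | n + 1 => qint q (n + 1) * qfact q n

/-- The `q`-binomial coefficient `C(n,k)_q = [n]_q!/([k]_q! [n-k]_q!)`, equal to `0` for `k > n`. -/
noncomputable def qbinom (q : ℝ) (n k : ℕ) : ℝ :=
  if k ≤ n then qfact q n / (qfact q k * qfact q (n - k)) else 0

/-- The `q`-hyperharmonic numbers: `H_n^{(0)}(q) = 1/(q [n]_q)` and
`H_n^{(r)}(q) = ∑_{j=1}^n q^j H_j^{(r-1)}(q)` for `r ≥ 1` (so `H_0^{(r)}(q) = 0`). -/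
noncomputable def qhyp (q : ℝ) : ℕ → ℕ → ℝ
  | 0, n => 1 / (q * qint q n)
  | r + 1, n => ∑ j ∈ Finset.Icc 1 n, q ^ j * qhyp q r j

/-! Writing `r = s + 1`, the recurrence `H_{n+1}^{(s+1)} = H_n^{(s+1)} + q^{n+1} H_{n+1}^{(s)}`
and `[n+s+1]_q = [n+1]_q + q^{n+1} [s]_q` turn the identity into a relation between consecutive
orders, `q [n+1]_q H_{n+1}^{(s)} = q [s]_q H_n^{(s+1)} + q^s C(n+s, s)_q`. This relation is proved
by induction on `s` and then on `n`: in the step from `n` to `n + 1` the relation for `s - 1`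
supplies the identity in order `s` at `n + 1`, and the `q`-Pascal rule absorbs the binomial terms. -/

section

variable {q : ℝ}

lemma qint_eq_geom_sum (hq1 : q ≠ 1) (n : ℕ) : qint q n = ∑ i ∈ Finset.range n, q ^ i := by
  rw [geom_sum_eq hq1, qint, ← neg_div_neg_eq, neg_sub, neg_sub]

lemma qint_pos (hq : 0 < q) (hq1 : q ≠ 1) {n : ℕ} (hn : n ≠ 0) : 0 < qint q n := by
  rw [qint_eq_geom_sum hq1]
  exact Finset.sum_pos (fun i _ ↦ pow_pos hq i) (Finset.nonempty_range_iff.mpr hn)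

lemma qint_one (hq1 : q ≠ 1) : qint q 1 = 1 := by
  rw [qint, pow_one, div_self (sub_ne_zero.mpr hq1.symm)]

lemma qint_add (hq1 : q ≠ 1) (a b : ℕ) : qint q (a + b) = qint q a + q ^ a * qint q b := by
  have : (1 : ℝ) - q ≠ 0 := sub_ne_zero.mpr hq1.symm
  simp only [qint, pow_add]
  field_simp
  ring

lemma qfact_pos (hq : 0 < q) (hq1 : q ≠ 1) : ∀ n, 0 < qfact q n
  | 0 => one_pos
  | n + 1 => mul_pos (qint_pos hq hq1 n.succ_ne_zero) (qfact_pos hq hq1 n)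

lemma qbinom_zero_right (hq : 0 < q) (hq1 : q ≠ 1) (n : ℕ) : qbinom q n 0 = 1 := by
  simp [qbinom, qfact, (qfact_pos hq hq1 n).ne']

lemma qbinom_self (hq : 0 < q) (hq1 : q ≠ 1) (n : ℕ) : qbinom q n n = 1 := by
  simp [qbinom, qfact, (qfact_pos hq hq1 n).ne']

lemma qbinom_succ_succ (hq : 0 < q) (hq1 : q ≠ 1) (m k : ℕ) :
    qbinom q (m + k + 1) (k + 1) = qbinom q (m + k) (k + 1) + q ^ m * qbinom q (m + k) k := by
  rcases m with _ | m
  · rw [zero_add, qbinom_self hq hq1, qbinom_self hq hq1, qbinom, if_neg (by omega), pow_zero,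
      zero_add, one_mul]
  simp only [qbinom, (by omega : k + 1 ≤ m + 1 + k + 1), (by omega : k + 1 ≤ m + 1 + k),
    (by omega : k ≤ m + 1 + k), if_true, (by omega : m + 1 + k + 1 - (k + 1) = m + 1),
    (by omega : m + 1 + k - (k + 1) = m), (by omega : m + 1 + k - k = m + 1)]
  have hsplit : qint q (m + 1 + k + 1) = qint q (m + 1) + q ^ (m + 1) * qint q (k + 1) := by
    rw [add_assoc, qint_add hq1]
  rw [qfact, qfact, qfact, hsplit]
  have := (qfact_pos hq hq1 k).ne'
  have := (qfact_pos hq hq1 m).ne'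
  have := (qint_pos hq hq1 m.succ_ne_zero).ne'
  have := (qint_pos hq hq1 k.succ_ne_zero).ne'
  field_simp

lemma qhyp_succ_zero (r : ℕ) : qhyp q (r + 1) 0 = 0 := by
  simp [qhyp]

lemma qhyp_succ_succ (r n : ℕ) :
    qhyp q (r + 1) (n + 1) = qhyp q (r + 1) n + q ^ (n + 1) * qhyp q r (n + 1) :=
  Finset.sum_Icc_succ_top (by omega) _

lemma q_mul_qhyp_one (hq0 : q ≠ 0) (hq1 : q ≠ 1) : ∀ r, q * qhyp q r 1 = q ^ r
  | 0 => by simp [qhyp, qint_one hq1, hq0]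
  | r + 1 => by
    rw [qhyp, Finset.Icc_self, Finset.sum_singleton, pow_one, mul_left_comm,
      q_mul_qhyp_one hq0 hq1 r, pow_succ']

lemma qhyp_shift_of_order_step (hq1 : q ≠ 1) {s n : ℕ}
    (h : q * qint q (n + 1) * qhyp q s (n + 1) =
      q * qint q s * qhyp q (s + 1) n + q ^ s * qbinom q (n + s) s) :
    qint q (n + s + 1) * qhyp q (s + 1) n =
      qint q (n + 1) * qhyp q (s + 1) (n + 1) - q ^ (n + s) * qbinom q (n + s) s := by
  rw [qhyp_succ_succ, add_right_comm, qint_add hq1 (n + 1)]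
  linear_combination (-q ^ n) * h

lemma qhyp_order_step (hq : 0 < q) (hq1 : q ≠ 1) (s n : ℕ) :
    q * qint q (n + 1) * qhyp q s (n + 1) =
      q * qint q s * qhyp q (s + 1) n + q ^ s * qbinom q (n + s) s := by
  induction s generalizing n with
  | zero =>
    have := (qint_pos hq hq1 n.succ_ne_zero).ne'
    simp only [qhyp, qbinom_zero_right hq hq1]
    field_simp
    simp [qint]
  | succ s ihs =>
    induction n with
    | zero =>
      rw [qhyp_succ_zero, zero_add, zero_add, qbinom_self hq hq1, qint_one hq1, mul_one,
        q_mul_qhyp_one hq.ne' hq1]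
      ring
    | succ n ihn =>
      have hshift := qhyp_shift_of_order_step hq1 (ihs (n + 1))
      rw [add_assoc, qint_add hq1 (n + 1) (s + 1)] at hshift
      have hpascal := qbinom_succ_succ hq hq1 (n + 1) s
      rw [show n + (s + 1) = n + 1 + s by omega] at ihn
      rw [qhyp_succ_succ (s + 1) n, ← add_assoc, hpascal]
      linear_combination ihn - q * hshift

end

theorem qhyp_shift_general (q : ℝ) (hq : 0 < q) (hq1 : q ≠ 1) (n r : ℕ)
    (hr : 1 ≤ r) :
    qint q (n + r) * qhyp q r n =
      qint q (n + 1) * qhyp q r (n + 1) -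
        q ^ (n + r - 1) * qbinom q (n + r - 1) (r - 1) := by
  obtain ⟨s, rfl⟩ := Nat.exists_eq_add_of_le' hr
  rw [Nat.add_sub_cancel, ← add_assoc, Nat.add_sub_cancel]
  exact qhyp_shift_of_order_step hq1 (qhyp_order_step hq hq1 s n)

/-- For `q > 0`, `q ≠ 1` and integers `n, r ≥ 1`,
`[n+r]_q H_n^{(r)}(q) = [n+1]_q H_{n+1}^{(r)}(q) - q^{n+r-1} C(n+r-1, r-1)_q`. -/
theorem qhyp_shift (q : ℝ) (hq : 0 < q) (hq1 : q ≠ 1) (n r : ℕ)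
    (hn : 1 ≤ n) (hr : 1 ≤ r) :
    qint q (n + r) * qhyp q r n =
      qint q (n + 1) * qhyp q r (n + 1) -
        q ^ (n + r - 1) * qbinom q (n + r - 1) (r - 1) :=
  qhyp_shift_general q hq hq1 n r hr
end

section
/- For all positive integers $n$ and $r$, $\sum_{\ell=1}^{n} \ell\, H_{n-\ell}^{(r)} = \frac{n(n+r)}{r(r+1)} H_n^{(r)} - \frac{(n)^{(r)} \bigl((2r+1)n + r^2\bigr)}{(r-1)!\, r^2 (r+1)^2}$, where $(n)^{(r)} = n(n+1)\cdots(n+r-1)$ denotes the rising factorial. -/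
/-- The harmonic number `H_n = ∑_{j=1}^n 1/j`. -/
noncomputable def harm (n : ℕ) : ℝ := ∑ j ∈ Finset.Icc 1 n, (1 : ℝ) / j

/-- The hyperharmonic numbers: `H_n^{(1)} = H_n` and
`H_n^{(r)} = ∑_{ℓ=1}^n H_ℓ^{(r-1)}` for `r ≥ 2` (so `H_0^{(r)} = 0`). -/
noncomputable def hyp : ℕ → ℕ → ℝ
  | 0, _ => 0
  | 1, n => harm n
  | r + 2, n => ∑ ℓ ∈ Finset.Icc 1 n, hyp (r + 1) ℓ

/-- The rising factorial `(x)^{(m)} = x (x+1) ⋯ (x+m-1)`, with `(x)^{(0)} = 1`. -/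
noncomputable def rise (x : ℝ) (m : ℕ) : ℝ := ∏ i ∈ Finset.range m, (x + i)

/-!
Because `H^{(r+1)}` is the sequence of partial sums of `H^{(r)}` and `H^{(r)}_0 = 0`, the
convolution `∑ ℓ H^{(r)}_{n-ℓ}` is the second iterated partial sum, i.e. `H^{(r+2)}_{n-1}`.
The Conway–Guy closed form `H^{(r)}_n = C(n+r-1, r-1) (H_{n+r-1} - H_{r-1})` writes both
`H^{(r+2)}_{n-1}` and `H^{(r)}_n` through `C(n+r-1, r-1)` and `H_{n+r-1} - H_{r-1}`; comparing
the two expressions gives the identity.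
-/
open Finset

lemma sum_Icc_one_eq_sum_range_succ {M : Type*} [AddCommMonoid M] {f : ℕ → M} (hf : f 0 = 0)
    (n : ℕ) : ∑ i ∈ Icc 1 n, f i = ∑ i ∈ range (n + 1), f i := by
  rw [Nat.range_succ_eq_Icc_zero, ← insert_Icc_add_one_left_eq_Icc (Nat.zero_le n),
    sum_insert (by simp), hf, zero_add]
  rfl

lemma sum_range_mul_sub_eq_sum_sum_range {R : Type*} [Semiring R] (f : ℕ → R) (n : ℕ) :
    ∑ ℓ ∈ range (n + 1), (ℓ : R) * f (n - ℓ) = ∑ i ∈ range n, ∑ j ∈ range (i + 1), f j := by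
  induction n with
  | zero => simp
  | succ n ih =>
    have hsplit : ∀ ℓ ∈ range (n + 1), ((ℓ + 1 : ℕ) : R) * f (n + 1 - (ℓ + 1)) =
        (ℓ : R) * f (n - ℓ) + f (n - ℓ) := fun ℓ _ => by
      rw [Nat.add_sub_add_right, Nat.cast_succ, add_one_mul]
    have hreflect : ∑ ℓ ∈ range (n + 1), f (n - ℓ) = ∑ j ∈ range (n + 1), f j := by
      simpa using sum_range_reflect f (n + 1)
    rw [sum_range_succ', sum_congr rfl hsplit, sum_add_distrib, ih, hreflect, Nat.cast_zero,
      zero_mul, add_zero, sum_range_succ (fun i => ∑ j ∈ range (i + 1), f j) n]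

lemma harm_succ (n : ℕ) : harm (n + 1) = harm n + 1 / (n + 1 : ℝ) := by
  rw [harm, sum_Icc_succ_top (by omega), ← harm]
  push_cast; rfl

lemma hyp_zero_right (r : ℕ) : hyp r 0 = 0 := by
  rcases r with _ | _ | r <;> simp [hyp, harm]

lemma hyp_add_two_eq_sum_range (r n : ℕ) :
    hyp (r + 2) n = ∑ j ∈ range (n + 1), hyp (r + 1) j :=
  sum_Icc_one_eq_sum_range_succ (hyp_zero_right _) n

lemma hyp_add_two_succ (r n : ℕ) : hyp (r + 2) (n + 1) = hyp (r + 2) n + hyp (r + 1) (n + 1) := by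
  rw [hyp_add_two_eq_sum_range, sum_range_succ, ← hyp_add_two_eq_sum_range]

lemma hyp_succ_eq_choose_mul (s n : ℕ) :
    hyp (s + 1) n = ((n + s).choose s : ℝ) * (harm (n + s) - harm s) := by
  induction s generalizing n with
  | zero => simp [hyp, harm]
  | succ s ih =>
    induction n with
    | zero => simp [hyp_zero_right]
    | succ n ihn =>
      rw [hyp_add_two_succ, ihn, ih]
      set N := n + s + 1
      have hN₁ : n + (s + 1) = N := by omega
      have hN₂ : n + 1 + (s + 1) = N + 1 := by omega
      have hN₃ : n + 1 + s = N := by omega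
      have habsorb : ((N + 1 : ℕ) : ℝ) * N.choose s = (N + 1).choose (s + 1) * (s + 1 : ℕ) := by
        exact_mod_cast Nat.add_one_mul_choose_eq N s
      rw [Nat.choose_succ_succ'] at habsorb
      rw [hN₁, hN₂, hN₃, Nat.choose_succ_succ' N s, harm_succ N, harm_succ s]
      push_cast at habsorb ⊢
      field_simp
      linear_combination habsorb

lemma sum_Icc_mul_hyp_sub_eq_hyp_add_three (r k : ℕ) :
    ∑ ℓ ∈ Icc 1 (k + 1), (ℓ : ℝ) * hyp (r + 1) (k + 1 - ℓ) = hyp (r + 3) k := by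
  rw [sum_Icc_one_eq_sum_range_succ (by simp), sum_range_mul_sub_eq_sum_sum_range]
  simp_rw [← hyp_add_two_eq_sum_range]

lemma rise_natCast (n m : ℕ) : rise n m = n.ascFactorial m := by
  simp [rise, Nat.ascFactorial_eq_prod_range]

lemma choose_add_two_mul (k s : ℕ) :
    (k + s + 2).choose (s + 2) * ((s + 1) * (s + 2)) =
      (k + s + 1).choose s * (k + 1) * (k + s + 2) := by
  have h₁ := Nat.add_one_mul_choose_eq (k + s + 1) (s + 1)
  have h₂ := Nat.choose_succ_right_eq (k + s + 1) s
  rw [show k + s + 1 - s = k + 1 by omega] at h₂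
  grind

lemma ascFactorial_add_one_eq_factorial_mul_choose (k s : ℕ) :
    (k + 1).ascFactorial (s + 1) = s.factorial * (k + 1) * (k + s + 1).choose s := by
  have h := Nat.choose_succ_right_eq (k + s + 1) s
  rw [show k + s + 1 - s = k + 1 by omega] at h
  rw [Nat.ascFactorial_eq_factorial_mul_choose, ← add_assoc, Nat.factorial_succ]
  linear_combination s.factorial * h

lemma hyp_add_three_eq (s k : ℕ) :
    hyp (s + 3) k = (k + 1) * (k + s + 2) / ((s + 1) * (s + 2)) * hyp (s + 1) (k + 1) -
      rise (k + 1) (s + 1) * ((2 * s + 3) * (k + 1) + (s + 1) ^ 2) /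
        (s.factorial * (s + 1) ^ 2 * (s + 2) ^ 2) := by
  have hchoose : ((k + s + 2).choose (s + 2) : ℝ) =
      (k + s + 1).choose s * (k + 1) * (k + s + 2) / ((s + 1) * (s + 2)) := by
    rw [eq_div_iff (by positivity)]
    exact_mod_cast choose_add_two_mul k s
  have hrise : rise (k + 1) (s + 1) = s.factorial * (k + 1) * (k + s + 1).choose s := by
    rw [show (k + 1 : ℝ) = (k + 1 : ℕ) by push_cast; rfl, rise_natCast,
      ascFactorial_add_one_eq_factorial_mul_choose]
    push_cast; rfl
  rw [hyp_succ_eq_choose_mul (s + 2), hyp_succ_eq_choose_mul s, hrise,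
    show k + (s + 2) = k + s + 1 + 1 by omega, show k + 1 + s = k + s + 1 by omega,
    show k + s + 1 + 1 = k + s + 2 by omega, hchoose, harm_succ (k + s + 1), harm_succ (s + 1),
    harm_succ s]
  push_cast
  field_simp
  ring

theorem sum_backward_mul_hyp_general (n r : ℕ) (hr : 1 ≤ r) :
    ∑ ℓ ∈ Finset.Icc 1 n, (ℓ : ℝ) * hyp r (n - ℓ) =
      (n : ℝ) * (n + r) / (r * (r + 1)) * hyp r n -
        rise (n : ℝ) r * ((2 * r + 1) * n + (r : ℝ) ^ 2) /
          ((Nat.factorial (r - 1) : ℝ) * r ^ 2 * (r + 1) ^ 2) := by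
  obtain ⟨s, rfl⟩ := Nat.exists_eq_add_of_le' hr
  rcases n with _ | k
  · simp [rise, prod_range_succ']
  · rw [sum_Icc_mul_hyp_sub_eq_hyp_add_three, hyp_add_three_eq, Nat.add_sub_cancel]
    push_cast
    ring

/-- For positive integers `n, r`,
`∑_{ℓ=1}^n ℓ H_{n-ℓ}^{(r)} = (n(n+r)/(r(r+1))) H_n^{(r)}
   - (n)^{(r)} ((2r+1)n + r²) / ((r-1)! r² (r+1)²)`. -/
theorem sum_backward_mul_hyp (n r : ℕ) (hn : 1 ≤ n) (hr : 1 ≤ r) :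
    ∑ ℓ ∈ Finset.Icc 1 n, (ℓ : ℝ) * hyp r (n - ℓ) =
      (n : ℝ) * (n + r) / (r * (r + 1)) * hyp r n -
        rise (n : ℝ) r * ((2 * r + 1) * n + (r : ℝ) ^ 2) /
          ((Nat.factorial (r - 1) : ℝ) * r ^ 2 * (r + 1) ^ 2) :=
  sum_backward_mul_hyp_general n r hr
end
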